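/- arXiv:1805.00091 — 4 statements merged into one kernel-verified Lean document; each statement's English description precedes it below -/
import Mathlib

section
/- Let G and H be finite groups and (φ, θ) an isoclinism from G to H. Then Pr_g(G) = Pr_{θ(g)}(H) for every g ∈ G'. -/
/-
The commutator `[x, y]` only depends on the cosets `xZ(G)` and `yZ(G)`, so it descends to a map
on `(G/Z(G))²`, and `Pr_g(G)` is the proportion of pairs in `(G/Z(G))²` whose commutator is `g`:
every such pair lifts to exactly `|Z(G)|²` pairs of `G²`. An isoclinism `(φ, θ)` says precisely
that `φ × φ` intertwines the descended commutator maps with `θ`, so it carries the pairs with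
commutator `g` bijectively onto those with commutator `θ g`.
-/

open scoped Classical

namespace Paper

/-- The commutator `[x,y] = x⁻¹y⁻¹xy`. -/
def comm {G : Type*} [Group G] (x y : G) : G := x⁻¹ * y⁻¹ * x * y

/-- `K(G)`, the set of commutators in `G`. -/
def KG (G : Type*) [Group G] : Set G := {g : G | ∃ x y : G, comm x y = g}

/-- The fiber of `g` under the commutator word map. -/
def fiber {G : Type*} [Group G] (g : G) : Set (G × G) := {q : G × G | comm q.1 q.2 = g}

/-- `Pr_g(G) = |fiber(g)| / |G|²`. -/
noncomputable def Pr (G : Type*) [Group G] (g : G) : ℚ :=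
  (Nat.card (fiber g) : ℚ) / ((Nat.card G : ℚ)) ^ 2

/-- `P(G) = {Pr_g(G) : g ∈ K(G), g ≠ 1}`. -/
noncomputable def PSet (G : Type*) [Group G] : Set ℚ :=
  {q : ℚ | ∃ g ∈ KG G, g ≠ 1 ∧ Pr G g = q}

/-- The conjugacy class `g^G` of `g` in `G`. -/
def conjClass {G : Type*} [Group G] (g : G) : Set G := {h : G | ∃ x : G, x⁻¹ * g * x = h}

/-- `G` is of conjugate type `(1, m)`: every noncentral element has conjugacy
class of size exactly `m`. -/
def IsConjugateType1 (G : Type*) [Group G] (m : ℕ) : Prop :=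
  ∀ g : G, g ∉ Subgroup.center G → Nat.card (conjClass g) = m

/-- `TZ_g = {xZ(G) ∈ G/Z(G) : g ∈ [x,G]}`. -/
def TZ (G : Type*) [Group G] (g : G) : Set (G ⧸ Subgroup.center G) :=
  {xz : G ⧸ Subgroup.center G |
    ∃ x : G, (QuotientGroup.mk x : G ⧸ Subgroup.center G) = xz ∧ ∃ h : G, comm x h = g}


open scoped commutatorElement in
lemma comm_mem_commutator {G : Type*} [Group G] (x y : G) : comm x y ∈ commutator G := by
  have h : comm x y = ⁅x⁻¹, y⁻¹⁆ := by
    simp only [comm, commutatorElement_def, inv_inv]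
  rw [h, commutator_def]
  exact Subgroup.commutator_mem_commutator (Subgroup.mem_top _) (Subgroup.mem_top _)


section Counting

open QuotientGroup

theorem card_preimage_mk_div_card {A : Type*} [Group A] (N : Subgroup A) [Finite N]
    (t : Set (A ⧸ N)) :
    (Nat.card (mk ⁻¹' t : Set A) : ℚ) / Nat.card A = Nat.card t / Nat.card (A ⧸ N) := by
  have hN : (Nat.card N : ℚ) ≠ 0 := by exact_mod_cast Nat.card_pos.ne'
  rw [Nat.card_congr (preimageMkEquivSubgroupProdSet N t), Nat.card_prod,
    Subgroup.card_eq_card_quotient_mul_card_subgroup N]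
  push_cast
  rw [mul_comm (Nat.card N : ℚ), mul_div_mul_right _ _ hN]

end Counting

section CentralComm

open Subgroup QuotientGroup

variable {G : Type*} [Group G]

theorem comm_mul_mem_center_left (x y : G) {z : G} (hz : z ∈ center G) :
    comm (x * z) y = comm x y :=
  calc comm (x * z) y = z⁻¹ * (x⁻¹ * y⁻¹ * x) * z * y := by simp only [comm]; group
    _ = comm x y := by rw [← mem_center_iff.mp (inv_mem hz)]; simp only [comm]; group

theorem comm_inv (x y : G) : (comm x y)⁻¹ = comm y x := by
  simp only [comm]; group

theorem comm_mul_mem_center_right (x y : G) {w : G} (hw : w ∈ center G) :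
    comm x (y * w) = comm x y := by
  rw [← comm_inv, comm_mul_mem_center_left _ _ hw, comm_inv]

variable (G) in
def centralComm : G ⧸ center G → G ⧸ center G → G :=
  Quotient.lift₂ comm fun x y x' y' hx hy => by
    rw [← mul_inv_cancel_left x x', ← mul_inv_cancel_left y y',
      comm_mul_mem_center_left _ _ (leftRel_apply.mp hx),
      comm_mul_mem_center_right _ _ (leftRel_apply.mp hy)]

theorem centralComm_mem_commutator (a b : G ⧸ center G) : centralComm G a b ∈ commutator G := by
  induction a using QuotientGroup.induction_on
  induction b using QuotientGroup.induction_on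
  exact comm_mem_commutator _ _

def centralFiber (g : G) : Set ((G ⧸ center G) × (G ⧸ center G)) :=
  {p | centralComm G p.1 p.2 = g}

theorem fiber_eq_preimage_centralFiber (g : G) :
    fiber g = mk ⁻¹' (QuotientGroup.prodEquiv (center G) (center G) ⁻¹' centralFiber g) := rfl

theorem Pr_eq_card_centralFiber_div [Finite G] (g : G) :
    Pr G g = Nat.card (centralFiber g) / Nat.card ((G ⧸ center G) × (G ⧸ center G)) := by
  let e := QuotientGroup.prodEquiv (center G) (center G)
  rw [Pr, fiber_eq_preimage_centralFiber, sq, ← Nat.cast_mul, ← Nat.card_prod,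
    card_preimage_mk_div_card, Nat.card_preimage_of_injective e.injective (by simp),
    Nat.card_congr e]

end CentralComm

section Isoclinism

open Subgroup QuotientGroup

variable {G H : Type*} [Group G] [Group H]
    (φ : (G ⧸ center G) ≃* (H ⧸ center H)) (θ : commutator G ≃* commutator H)
    (hcompat : ∀ (x y : G) (x' y' : H), φ (mk x) = mk x' → φ (mk y) = mk y' →
      ((θ ⟨comm x y, comm_mem_commutator x y⟩ : commutator H) : H) = comm x' y')
include hcompat

theorem centralComm_map (a b : G ⧸ center G) :
    (θ ⟨centralComm G a b, centralComm_mem_commutator a b⟩ : H) =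
      centralComm H (φ a) (φ b) := by
  induction a using QuotientGroup.induction_on with | H x => ?_
  induction b using QuotientGroup.induction_on with | H y => ?_
  obtain ⟨x', hx'⟩ := mk_surjective (φ x)
  obtain ⟨y', hy'⟩ := mk_surjective (φ y)
  rw [← hx', ← hy']
  exact hcompat x y x' y' hx'.symm hy'.symm

def centralFiberEquiv (g : commutator G) : centralFiber (g : G) ≃ centralFiber (θ g : H) :=
  (φ.toEquiv.prodCongr φ.toEquiv).subtypeEquiv fun p => by
    change _ = _ ↔ centralComm H (φ p.1) (φ p.2) = θ g
    rw [← centralComm_map φ θ hcompat]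
    simp only [SetLike.coe_eq_coe, EmbeddingLike.apply_eq_iff_eq, Subtype.ext_iff]

end Isoclinism

/-- isoclinic finite groups have the same commutator fiber
probabilities: `Pr_g(G) = Pr_{θ(g)}(H)` for all `g ∈ G'`. -/
theorem stmt3 (G H : Type*) [Group G] [Group H] [Finite G] [Finite H]
    (φ : (G ⧸ Subgroup.center G) ≃* (H ⧸ Subgroup.center H))
    (θ : (commutator G) ≃* (commutator H))
    (hcompat : ∀ (x y : G) (x' y' : H),
      φ (QuotientGroup.mk x) = QuotientGroup.mk x' →
      φ (QuotientGroup.mk y) = QuotientGroup.mk y' →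
      ((θ ⟨comm x y, comm_mem_commutator x y⟩ : commutator H) : H) = comm x' y') :
    ∀ g : commutator G, Pr G (g : G) = Pr H ((θ g : commutator H) : H) := by
  intro g
  rw [Pr_eq_card_centralFiber_div, Pr_eq_card_centralFiber_div,
    Nat.card_congr (centralFiberEquiv φ θ hcompat g),
    Nat.card_congr (φ.toEquiv.prodCongr φ.toEquiv)]

end Paper
end

section
/- Let p be a prime, n ≥ 1, and let G be a finite group of conjugate type (1, p^n). Then for every g ∈ K(G) with g ≠ 1, Pr_g(G) = |TZ_g| / ([G : Z(G)] · p^n), and Pr_1(G) = (1/[G : Z(G)]) · (1 + ([G : Z(G)] − 1)/p^n). -/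
open scoped Classical

namespace Paper

/-!
Let `G` be of conjugate type `(1, m)`. For fixed `x`, the solutions `y` of `[x, y] = g` form,
when there are any, a coset of the centralizer `C_G(x)`, and by orbit-stabilizer
`|C_G(x)| = |G| / m` when `x` is noncentral. If `g ≠ 1`, every `x` with `g ∈ [x, G]` is
noncentral, and these `x` form the preimage of `TZ_g` in `G`, of size `|Z(G)| · |TZ_g|`.
If `g = 1`, central `x` contribute `|G|` solutions each and noncentral ones `|G| / m`.
Dividing by `|G|² = (|Z(G)| · [G : Z(G)])²` gives both formulas.
-/

section Commutators

variable {G : Type*} [Group G]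

theorem comm_eq_comm_iff_mul_inv_mem_centralizer {x y h : G} :
    comm x y = comm x h ↔ y * h⁻¹ ∈ Subgroup.centralizer {x} := by
  rw [Subgroup.mem_centralizer_singleton_iff]
  constructor
  · intro H
    have H' : x * comm x y = x * comm x h := by rw [H]
    simp only [comm] at H'
    calc y * h⁻¹ * x = y * (x * (x⁻¹ * h⁻¹ * x * h)) * h⁻¹ := by group
      _ = y * (x * (x⁻¹ * y⁻¹ * x * y)) * h⁻¹ := by rw [H']
      _ = x * (y * h⁻¹) := by group
  · intro H
    simp only [comm]
    calc x⁻¹ * y⁻¹ * x * y = x⁻¹ * h⁻¹ * ((y * h⁻¹)⁻¹ * x * (y * h⁻¹)) * h := by group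
      _ = x⁻¹ * h⁻¹ * x * h := by rw [mul_assoc _ x, ← H]; group

theorem comm_eq_one_iff_mem_centralizer {x y : G} :
    comm x y = 1 ↔ y ∈ Subgroup.centralizer {x} := by
  simpa [comm] using comm_eq_comm_iff_mul_inv_mem_centralizer (x := x) (y := y) (h := 1)

theorem comm_eq_one_of_mem_center {x : G} (hx : x ∈ Subgroup.center G) (y : G) :
    comm x y = 1 :=
  comm_eq_one_iff_mem_centralizer.2 <|
    Subgroup.mem_centralizer_singleton_iff.2 (Subgroup.mem_center_iff.1 hx y)

theorem comm_mul_of_mem_center {z : G} (hz : z ∈ Subgroup.center G) (x y : G) :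
    comm (x * z) y = comm x y := by
  calc comm (x * z) y = z⁻¹ * ((x⁻¹ * y⁻¹ * x) * z) * y := by simp only [comm]; group
    _ = comm x y := by rw [Subgroup.mem_center_iff.1 hz]; simp only [comm]; group

theorem card_comm_eq_card_centralizer {x h g : G} (hh : comm x h = g) :
    Nat.card {y // comm x y = g} = Nat.card (Subgroup.centralizer {x}) := by
  subst hh
  exact Nat.card_congr <| Equiv.subtypeEquiv (Equiv.mulRight h⁻¹)
    fun y => comm_eq_comm_iff_mul_inv_mem_centralizer

theorem preimage_mk_TZ (g : G) :
    QuotientGroup.mk ⁻¹' TZ G g = {x : G | ∃ h, comm x h = g} := by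
  ext x
  constructor
  · rintro ⟨x', hx', h, rfl⟩
    obtain ⟨z, hz, rfl⟩ : ∃ z ∈ Subgroup.center G, x = x' * z :=
      ⟨x'⁻¹ * x, QuotientGroup.eq.1 hx', by group⟩
    exact ⟨h, comm_mul_of_mem_center hz x' h⟩
  · rintro ⟨h, hh⟩
    exact ⟨x, rfl, h, hh⟩

theorem card_centralizer_of_mem_center {x : G} (hx : x ∈ Subgroup.center G) :
    Nat.card (Subgroup.centralizer {x}) = Nat.card G := by
  rw [Subgroup.centralizer_eq_top_iff_subset.2 (Set.singleton_subset_iff.2 hx),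
    Subgroup.card_top]

theorem card_conjClass_mul_card_centralizer [Finite G] (x : G) :
    Nat.card (conjClass x) * Nat.card (Subgroup.centralizer {x}) = Nat.card G := by
  have horbit : conjClass x = MulAction.orbit (ConjAct G) x := by
    ext y
    simp only [conjClass, Set.mem_ofPred_eq, ConjAct.mem_orbit_conjAct, isConj_iff]
    exact ⟨fun ⟨c, hc⟩ => ⟨c, by rw [← hc]; group⟩, fun ⟨c, hc⟩ => ⟨c, by rw [← hc]; group⟩⟩
  rw [horbit, Subgroup.nat_card_centralizer_nat_card_stabilizer, ← Nat.card_prod,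
    Nat.card_congr (MulAction.orbitProdStabilizerEquivGroup (ConjAct G) x)]
  rfl

end Commutators

section Counting

variable {G : Type*} [Group G] [Finite G] {m : ℕ}

theorem card_fiber_eq_sum [Fintype G] (g : G) :
    Nat.card (fiber g) = ∑ x : G, Nat.card {y // comm x y = g} := by
  rw [← Nat.card_sigma]
  exact Nat.card_congr
    { toFun q := ⟨q.1.1, q.1.2, q.2⟩
      invFun s := ⟨(s.1, s.2.1), s.2.2⟩ }

theorem IsConjugateType1.card_centralizer (hct : IsConjugateType1 G m) {x : G}
    (hx : x ∉ Subgroup.center G) :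
    (Nat.card (Subgroup.centralizer {x}) : ℚ) = Nat.card G / m := by
  have h := card_conjClass_mul_card_centralizer x
  rw [hct x hx] at h
  have hm : (m : ℚ) ≠ 0 := by
    rintro hm
    rw [Nat.cast_eq_zero] at hm
    rw [hm, zero_mul] at h
    exact Nat.card_pos.ne' h.symm
  rw [eq_div_iff hm, ← Nat.cast_mul, mul_comm, h]

theorem IsConjugateType1.card_fiber_of_ne_one (hct : IsConjugateType1 G m) {g : G}
    (hg : g ≠ 1) :
    (Nat.card (fiber g) : ℚ) =
      Nat.card (Subgroup.center G) * Nat.card (TZ G g) * (Nat.card G / m) := by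
  have := Fintype.ofFinite G
  have hW : (Finset.univ.filter fun x : G => ∃ h, comm x h = g).card =
      Nat.card (Subgroup.center G) * Nat.card (TZ G g) := by
    rw [← QuotientGroup.card_preimage_mk, preimage_mk_TZ, Nat.card_eq_fintype_card,
      ← Fintype.card_subtype]
    rfl
  have hsupport (x : G) (_ : x ∈ Finset.univ) (hx : Nat.card {y // comm x y = g} ≠ 0) :
      ∃ h, comm x h = g :=
    let ⟨⟨y, hy⟩⟩ := (Nat.card_ne_zero.1 hx).1
    ⟨y, hy⟩
  have hconst (x : G) (hx : x ∈ Finset.univ.filter fun x : G => ∃ h, comm x h = g) :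
      (Nat.card {y // comm x y = g} : ℚ) = Nat.card G / m := by
    obtain ⟨h, rfl⟩ := (Finset.mem_filter.1 hx).2
    have hxZ : x ∉ Subgroup.center G := fun hxZ => hg (comm_eq_one_of_mem_center hxZ h)
    rw [card_comm_eq_card_centralizer rfl, hct.card_centralizer hxZ]
  rw [card_fiber_eq_sum, ← Finset.sum_filter_of_ne hsupport, Nat.cast_sum,
    Finset.sum_congr rfl hconst, Finset.sum_const, nsmul_eq_mul, hW, Nat.cast_mul]

theorem IsConjugateType1.card_fiber_one (hct : IsConjugateType1 G m) :
    (Nat.card (fiber (1 : G)) : ℚ) =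
      Nat.card (Subgroup.center G) * Nat.card G +
        (Nat.card G - Nat.card (Subgroup.center G)) * (Nat.card G / m) := by
  have := Fintype.ofFinite G
  have hZ : (Finset.univ.filter (· ∈ Subgroup.center G)).card =
      Nat.card (Subgroup.center G) := by
    rw [Nat.card_eq_fintype_card, ← Fintype.card_subtype]
  have hnotZ : ((Finset.univ.filter (· ∉ Subgroup.center G)).card : ℚ) =
      Nat.card G - Nat.card (Subgroup.center G) := by
    rw [← hZ, eq_sub_iff_add_eq, ← Nat.cast_add, add_comm,
      Finset.card_filter_add_card_filter_not, Finset.card_univ, Nat.card_eq_fintype_card]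
  have hcentral (x : G) (hx : x ∈ Finset.univ.filter (· ∈ Subgroup.center G)) :
      (Nat.card (Subgroup.centralizer {x}) : ℚ) = Nat.card G := by
    rw [card_centralizer_of_mem_center (Finset.mem_filter.1 hx).2]
  have hnoncentral (x : G) (hx : x ∈ Finset.univ.filter (· ∉ Subgroup.center G)) :
      (Nat.card (Subgroup.centralizer {x}) : ℚ) = Nat.card G / m :=
    hct.card_centralizer (Finset.mem_filter.1 hx).2
  rw [card_fiber_eq_sum, Nat.cast_sum]
  simp only [card_comm_eq_card_centralizer (comm_eq_one_iff_mem_centralizer.2 (Subgroup.one_mem _))]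
  rw [← Finset.sum_filter_add_sum_filter_not _ (· ∈ Subgroup.center G),
    Finset.sum_congr rfl hcentral, Finset.sum_congr rfl hnoncentral, Finset.sum_const,
    Finset.sum_const, nsmul_eq_mul, nsmul_eq_mul, hZ, hnotZ]

theorem IsConjugateType1.pr_of_ne_one (hct : IsConjugateType1 G m) {g : G} (hg : g ≠ 1) :
    Pr G g = Nat.card (TZ G g) / ((Subgroup.center G).index * m) := by
  have hG : (Nat.card (Subgroup.center G) : ℚ) * (Subgroup.center G).index = Nat.card G := by
    exact_mod_cast (Subgroup.center G).card_mul_index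
  have hZ : (Nat.card (Subgroup.center G) : ℚ) ≠ 0 := Nat.cast_ne_zero.2 Nat.card_pos.ne'
  have hk : ((Subgroup.center G).index : ℚ) ≠ 0 :=
    Nat.cast_ne_zero.2 Subgroup.index_ne_zero_of_finite
  rw [Pr, hct.card_fiber_of_ne_one hg, ← hG]
  field_simp

theorem IsConjugateType1.pr_one (hct : IsConjugateType1 G m) :
    Pr G 1 = 1 / (Subgroup.center G).index * (1 + ((Subgroup.center G).index - 1) / m) := by
  have hG : (Nat.card (Subgroup.center G) : ℚ) * (Subgroup.center G).index = Nat.card G := by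
    exact_mod_cast (Subgroup.center G).card_mul_index
  have hZ : (Nat.card (Subgroup.center G) : ℚ) ≠ 0 := Nat.cast_ne_zero.2 Nat.card_pos.ne'
  have hk : ((Subgroup.center G).index : ℚ) ≠ 0 :=
    Nat.cast_ne_zero.2 Subgroup.index_ne_zero_of_finite
  rw [Pr, hct.card_fiber_one, ← hG]
  field_simp

end Counting

theorem stmt6_general (p n : ℕ)
    (G : Type*) [Group G] [Finite G] (hct : IsConjugateType1 G (p ^ n)) :
    (∀ g : G, g ∈ KG G → g ≠ 1 →
      Pr G g = (Nat.card (TZ G g) : ℚ) /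
        (((Subgroup.center G).index : ℚ) * (p : ℚ) ^ n)) ∧
    Pr G 1 = (1 / ((Subgroup.center G).index : ℚ)) *
      (1 + (((Subgroup.center G).index : ℚ) - 1) / (p : ℚ) ^ n) := by
  refine ⟨fun g _ hg => ?_, ?_⟩
  · exact_mod_cast hct.pr_of_ne_one hg
  · exact_mod_cast hct.pr_one

/-- formulas for `Pr_g(G)` in a finite group of conjugate type
`(1, p^n)`. -/
theorem stmt6 (p n : ℕ) (hp : p.Prime) (hn : 1 ≤ n)
    (G : Type*) [Group G] [Finite G] (hct : IsConjugateType1 G (p ^ n)) :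
    (∀ g : G, g ∈ KG G → g ≠ 1 →
      Pr G g = (Nat.card (TZ G g) : ℚ) /
        (((Subgroup.center G).index : ℚ) * (p : ℚ) ^ n)) ∧
    Pr G 1 = (1 / ((Subgroup.center G).index : ℚ)) *
      (1 + (((Subgroup.center G).index : ℚ) - 1) / (p : ℚ) ^ n) :=
  stmt6_general p n G hct

end Paper
end

section
/- Let p > 2 be a prime, r ≥ 1, and let G_r be Ito's group. Then |fiber(g)| = (p² − 1)·p^{r²+r+1} for every g ∈ K(G_r) with g ≠ 1, and |fiber(1)| = (p^{r+1} + p^r − 1)·p^{r²+r+1}. -/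
/-!
The relations make every `[aᵢ, aⱼ]` central of order `p`, so modulo the subgroup `Z` they generate,
`G_r` is abelian generated by `r + 1` elements of order `p`, while `Z` is abelian generated by
`C(r+1, 2)` such elements; hence `|G_r| ≤ p ^ (r + 1 + C(r+1, 2))`. The group of pairs
`(a, c) ∈ 𝔽ₚ^(r+1) × 𝔽ₚ^C(r+1,2)` with `(a, c)(a', c') = (a + a', c + c' - (a_j a'_i)_{i<j})`
satisfies the relations and is generated by the images of the `aᵢ`; comparing orders, `G_r` maps
isomorphically onto it.

There `[x, y] = (0, x.a ∧ y.a)`, so the fiber of `(0, A)` is `{(v, w) : v ∧ w = A}` times the free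
choice of both `c`-components. For `A = u ∧ z ≠ 0` the solutions are `(au + bz, cu + dz)` with
`ad - bc = 1`, i.e. `|SL₂(𝔽ₚ)| = p(p² - 1)` of them; for `A = 0` either `v = 0` or `w ∈ 𝔽ₚ v`,
giving `p^(r+1) + (p^(r+1) - 1) p` solutions.
-/

open scoped Classical

namespace Paper

/-- The relations of Ito's group `G_r`: the commutators are central,
and the generators and their commutators have order dividing `p`. -/
def itoRels (p r : ℕ) : Set (FreeGroup (Fin (r + 1))) :=
  {w : FreeGroup (Fin (r + 1)) |
    (∃ i j k : Fin (r + 1), i < j ∧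
      w = comm (FreeGroup.of k) (comm (FreeGroup.of i) (FreeGroup.of j))) ∨
    (∃ i : Fin (r + 1), w = (FreeGroup.of i) ^ p) ∨
    (∃ i j : Fin (r + 1), i < j ∧ w = (comm (FreeGroup.of i) (FreeGroup.of j)) ^ p)}

/-- Ito's group `G_r`, presented on `r+1` generators. -/
abbrev ItoGroup (p r : ℕ) : Type := PresentedGroup (itoRels p r)

/-- The generators `a_1, …, a_{r+1}` of Ito's group (0-indexed). -/
def itoGen (p r : ℕ) (i : Fin (r + 1)) : ItoGroup p r := PresentedGroup.of i

section GroupLemmas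

variable {G H : Type*} [Group G] [Group H]

@[simp] lemma map_comm {M : Type*} [FunLike M G H] [MonoidHomClass M G H] (φ : M) (x y : G) :
    φ (comm x y) = comm (φ x) (φ y) := by
  simp [comm]

lemma comm_eq_one_iff {x y : G} : comm x y = 1 ↔ x * y = y * x := by
  rw [comm, mul_assoc, mul_assoc, inv_mul_eq_one, eq_inv_mul_iff_mul_eq, eq_comm]

lemma card_fiber_mulEquiv (e : G ≃* H) (g : G) : Nat.card (fiber (e g)) = Nat.card (fiber g) :=
  Nat.card_congr <| .symm <| (e.toEquiv.prodCongr e.toEquiv).subtypeEquiv fun xy => by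
    simp [fiber, ← map_comm]

lemma normal_of_le_center {K : Subgroup G} (h : K ≤ Subgroup.center G) : K.Normal :=
  ⟨fun n hn g => by rw [Subgroup.mem_center_iff.mp (h hn) g, mul_inv_cancel_right]; exact hn⟩

end GroupLemmas

section ElementaryAbelian

open Subgroup

variable {G : Type*} [Group G] {κ : Type*} [Fintype κ] {n : ℕ} [NeZero n] {f : κ → G}

open scoped IsMulCommutative in
theorem exists_surjective_closure_range (hcomm : ∀ i j, f i * f j = f j * f i)
    (hn : ∀ i, f i ^ n = 1) :
    ∃ Φ : (κ → ZMod n) → closure (Set.range f), Φ.Surjective := by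
  have : IsMulCommutative (closure (Set.range f)) :=
    isMulCommutative_closure (by rintro _ ⟨i, rfl⟩ _ ⟨j, rfl⟩; exact hcomm i j)
  let g (i : κ) : closure (Set.range f) := ⟨f i, subset_closure ⟨i, rfl⟩⟩
  refine ⟨fun a => ∏ i, g i ^ (a i).val, fun x => ?_⟩
  have hrange : Set.range g = ((↑) : closure (Set.range f) → G) ⁻¹' Set.range f := by
    ext x
    constructor
    · rintro ⟨i, rfl⟩
      exact ⟨i, rfl⟩
    · rintro ⟨i, hi⟩
      exact ⟨i, Subtype.ext hi⟩
  obtain ⟨a, rfl⟩ := exists_of_mem_closure_range g x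
    (by rw [hrange, closure_closure_coe_preimage]; exact mem_top x)
  refine ⟨fun i => a i, Finset.prod_congr rfl fun i _ => ?_⟩
  rw [← zpow_natCast, ZMod.val_intCast, ← zpow_eq_zpow_emod' _ (Subtype.ext (hn i))]

theorem finite_closure_range (hcomm : ∀ i j, f i * f j = f j * f i) (hn : ∀ i, f i ^ n = 1) :
    Finite (closure (Set.range f)) :=
  let ⟨_, hΦ⟩ := exists_surjective_closure_range hcomm hn
  .of_surjective _ hΦ

theorem card_closure_range_le (hcomm : ∀ i j, f i * f j = f j * f i) (hn : ∀ i, f i ^ n = 1) :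
    Nat.card (closure (Set.range f)) ≤ n ^ Fintype.card κ := by
  obtain ⟨Φ, hΦ⟩ := exists_surjective_closure_range hcomm hn
  simpa using Nat.card_le_card_of_surjective Φ hΦ

end ElementaryAbelian

section Wedge

abbrev Pairs (ι : Type*) [LinearOrder ι] : Type _ := {q : ι × ι // q.1 < q.2}

variable {ι : Type*} [LinearOrder ι]

lemma card_pairs [Fintype ι] : Fintype.card (Pairs ι) = (Fintype.card ι).choose 2 := by
  rw [Fintype.card_subtype, Fintype.card_product_filter_lt]

def wedge {R : Type*} [CommRing R] (v w : ι → R) : Pairs ι → R :=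
  fun q => v q.1.1 * w q.1.2 - v q.1.2 * w q.1.1

variable {R : Type*} [CommRing R]

@[simp] lemma wedge_zero_left (w : ι → R) : wedge 0 w = 0 := by
  ext q; simp [wedge]

@[simp] lemma wedge_zero_right (v : ι → R) : wedge v 0 = 0 := by
  ext q; simp [wedge]

lemma wedge_smul_add_smul (a b c d : R) (u z : ι → R) :
    wedge (a • u + b • z) (c • u + d • z) = (a * d - b * c) • wedge u z := by
  ext q; simp only [wedge, Pi.add_apply, Pi.smul_apply, smul_eq_mul]; ring

lemma wedge_eq_wedge_apply {v w u z : ι → R} (h : wedge v w = wedge u z) (i j : ι) :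
    v i * w j - v j * w i = u i * z j - u j * z i := by
  rcases lt_trichotomy i j with hij | rfl | hij
  · exact congrFun h ⟨(i, j), hij⟩
  · ring
  · have := congrFun h ⟨(j, i), hij⟩
    simp only [wedge] at this
    linear_combination -this

lemma smul_eq_of_wedge_eq {v w u z : ι → R} (h : wedge v w = wedge u z) (q : Pairs ι) :
    wedge u z q • v = wedge v z q • u + wedge u v q • z := by
  ext k
  have h1 := wedge_eq_wedge_apply h q.1.2 k
  have h2 := wedge_eq_wedge_apply h q.1.1 k
  have h3 := wedge_eq_wedge_apply h q.1.1 q.1.2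
  simp only [wedge, Pi.add_apply, Pi.smul_apply, smul_eq_mul]
  linear_combination -(v q.1.1) * h1 + (v q.1.2) * h2 - (v k) * h3

end Wedge

section SpecialLinearGroup

open Matrix

variable {F : Type*} [Field F] [Fintype F]

theorem card_specialLinearGroup_fin_two :
    Nat.card (SpecialLinearGroup (Fin 2) F) = (Fintype.card F ^ 2 - 1) * Fintype.card F := by
  set q := Fintype.card F
  let kerEquiv :
      (GeneralLinearGroup.det : GL (Fin 2) F →* Fˣ).ker ≃ SpecialLinearGroup (Fin 2) F :=
    { toFun g := ⟨g.1, by simpa [Units.ext_iff] using (MonoidHom.mem_ker.mp g.2)⟩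
      invFun A := ⟨SpecialLinearGroup.toGL A, by simp⟩
      left_inv g := Subtype.ext (Units.ext rfl)
      right_inv A := rfl }
  have hGL : Nat.card (GL (Fin 2) F) = Nat.card (SpecialLinearGroup (Fin 2) F) * (q - 1) := by
    rw [Subgroup.card_eq_card_quotient_mul_card_subgroup GeneralLinearGroup.det.ker,
      Nat.card_congr (QuotientGroup.quotientKerEquivOfSurjective _
        GeneralLinearGroup.det_surjective).toEquiv, Nat.card_units, Nat.card_congr kerEquiv,
      Nat.card_eq_fintype_card, mul_comm]
  rw [card_GL_field, Fin.prod_univ_two] at hGL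
  have hq : 1 < q := Fintype.one_lt_card
  have hsq : q ^ 2 - q = q * (q - 1) := by rw [Nat.mul_sub, sq, mul_one]
  simp only [Fin.val_zero, Fin.val_one, pow_zero, pow_one] at hGL
  rw [hsq, ← mul_assoc] at hGL
  exact (Nat.eq_of_mul_eq_mul_right (show 0 < q - 1 by omega) hGL).symm

end SpecialLinearGroup

section WedgeFiber

open Matrix

variable {ι : Type*} [LinearOrder ι] {F : Type*} [Field F]

lemma exists_eq_smul_of_wedge_eq_zero {v w : ι → F} (hv : v ≠ 0) (h : wedge v w = 0) :
    ∃ t : F, w = t • v := by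
  obtain ⟨i, hi⟩ : ∃ i, v i ≠ 0 := Function.ne_iff.mp hv
  refine ⟨w i / v i, funext fun k => ?_⟩
  have := wedge_eq_wedge_apply (h.trans (wedge_zero_left 0).symm) i k
  simp only [Pi.zero_apply, mul_zero, sub_zero] at this
  simp only [Pi.smul_apply, smul_eq_mul]
  field_simp
  linear_combination this

/-- Given `wedge u z q ≠ 0`, the solutions of `wedge v w = wedge u z` are the pairs
`(a u + b z, c u + d z)` with `ad - bc = 1`. -/
noncomputable def specialLinearGroupEquivWedgeFiber {u z : ι → F} {q : Pairs ι}
    (hq : wedge u z q ≠ 0) :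
    SpecialLinearGroup (Fin 2) F ≃
      {vw : (ι → F) × (ι → F) // wedge vw.1 vw.2 = wedge u z} where
  toFun M := ⟨(M 0 0 • u + M 0 1 • z, M 1 0 • u + M 1 1 • z), by
    rw [wedge_smul_add_smul, ← det_fin_two, M.det_coe, one_smul]⟩
  invFun vw := ⟨(wedge u z q)⁻¹ • !![wedge vw.1.1 z q, wedge u vw.1.1 q;
      wedge vw.1.2 z q, wedge u vw.1.2 q], by
    have hvw := congrFun vw.2 q
    simp only [wedge] at hvw hq ⊢
    rw [det_smul, det_fin_two_of, Fintype.card_fin]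
    field_simp
    linear_combination (u q.1.1 * z q.1.2 - u q.1.2 * z q.1.1) * hvw⟩
  left_inv M := by
    ext i j
    simp only [wedge] at hq
    fin_cases i <;> fin_cases j <;>
      simp [wedge] <;> field_simp <;> ring
  right_inv vw := by
    obtain ⟨⟨v, w⟩, hvw⟩ := vw
    have hw : wedge w (-v) = wedge u z := by
      rw [← hvw]; ext; simp only [wedge, Pi.neg_apply]; ring
    ext1
    simp only [Matrix.smul_apply, of_apply, cons_val', cons_val_zero, cons_val_one, empty_val',
      cons_val_fin_one, smul_eq_mul, mul_smul, ← smul_add]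
    rw [← smul_eq_of_wedge_eq hvw, ← smul_eq_of_wedge_eq hw, inv_smul_smul₀ hq,
      inv_smul_smul₀ hq]

variable [Fintype F]

theorem card_wedge_fiber_of_ne_zero {u z : ι → F} (h : wedge u z ≠ 0) :
    Nat.card {vw : (ι → F) × (ι → F) // wedge vw.1 vw.2 = wedge u z} =
      (Fintype.card F ^ 2 - 1) * Fintype.card F := by
  obtain ⟨q, hq⟩ := Function.ne_iff.mp h
  rw [← Nat.card_congr (specialLinearGroupEquivWedgeFiber hq), card_specialLinearGroup_fin_two]

lemma card_wedge_eq_zero_of_ne_zero {v : ι → F} (hv : v ≠ 0) :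
    Nat.card {w : ι → F // wedge v w = 0} = Fintype.card F := by
  have hbij : Function.Bijective fun t : F => (⟨t • v, by ext; simp [wedge]; ring⟩ :
      {w : ι → F // wedge v w = 0}) := by
    refine ⟨fun s t hst => smul_left_injective F hv (congrArg Subtype.val hst), ?_⟩
    rintro ⟨w, hw⟩
    obtain ⟨t, rfl⟩ := exists_eq_smul_of_wedge_eq_zero hv hw
    exact ⟨t, rfl⟩
  rw [← Nat.card_congr (Equiv.ofBijective _ hbij), Nat.card_eq_fintype_card]

theorem card_wedge_fiber_zero [Fintype ι] :
    Nat.card {vw : (ι → F) × (ι → F) // wedge vw.1 vw.2 = 0} =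
      Fintype.card F ^ (Fintype.card ι + 1) + Fintype.card F ^ Fintype.card ι -
        Fintype.card F := by
  set q := Fintype.card F
  have hcard (v : ι → F) : Nat.card {w : ι → F // wedge v w = 0} =
      if v = 0 then q ^ Fintype.card ι else q := by
    split_ifs with hv
    · subst hv
      simp [q]
    · exact card_wedge_eq_zero_of_ne_zero hv
  rw [Nat.card_congr (Equiv.subtypeProdEquivSigmaSubtype fun v w => wedge v w = 0), Nat.card_sigma]
  simp only [hcard]
  rw [← Finset.add_sum_erase _ _ (Finset.mem_univ 0), if_pos rfl,
    Finset.sum_congr rfl fun v hv => if_neg (Finset.ne_of_mem_erase hv), Finset.sum_const,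
    Finset.card_erase_of_mem (Finset.mem_univ _), Finset.card_univ, Fintype.card_fun, smul_eq_mul]
  change q ^ _ + (q ^ _ - 1) * q = _
  have hq : q ≤ q ^ (Fintype.card ι + 1) :=
    pow_succ q _ ▸ Nat.le_mul_of_pos_left q (pow_pos Fintype.card_pos _)
  rw [Nat.sub_mul, one_mul, ← pow_succ]
  omega

end WedgeFiber

namespace ItoGroup

open Subgroup

variable {p r : ℕ}

def genComm (p r : ℕ) (q : Pairs (Fin (r + 1))) : ItoGroup p r :=
  comm (itoGen p r q.1.1) (itoGen p r q.1.2)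

abbrev genCommSubgroup (p r : ℕ) : Subgroup (ItoGroup p r) := closure (Set.range (genComm p r))

@[simp] lemma mk_of (i : Fin (r + 1)) :
    PresentedGroup.mk (itoRels p r) (FreeGroup.of i) = itoGen p r i :=
  rfl

lemma itoGen_pow (i : Fin (r + 1)) : itoGen p r i ^ p = 1 := by
  simpa using PresentedGroup.one_of_mem (rels := itoRels p r) (Or.inr (Or.inl ⟨i, rfl⟩))

lemma genComm_pow (q : Pairs (Fin (r + 1))) : genComm p r q ^ p = 1 := by
  simpa [genComm] using
    PresentedGroup.one_of_mem (rels := itoRels p r) (Or.inr (Or.inr ⟨_, _, q.2, rfl⟩))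

lemma genComm_mem_center (q : Pairs (Fin (r + 1))) : genComm p r q ∈ center (ItoGroup p r) := by
  have hgen (k : Fin (r + 1)) : itoGen p r k ∈ centralizer {genComm p r q} := by
    rw [mem_centralizer_singleton_iff, ← comm_eq_one_iff]
    simpa [genComm] using
      PresentedGroup.one_of_mem (rels := itoRels p r) (Or.inl ⟨_, _, k, q.2, rfl⟩)
  have hle : closure (Set.range PresentedGroup.of) ≤ centralizer {genComm p r q} :=
    (closure_le _).mpr (Set.range_subset_iff.mpr hgen)
  rw [PresentedGroup.closure_range_of] at hle
  exact mem_center_iff.mpr fun g => mem_centralizer_singleton_iff.mp (hle (mem_top g))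

lemma genComm_mul_comm (q q' : Pairs (Fin (r + 1))) :
    genComm p r q * genComm p r q' = genComm p r q' * genComm p r q :=
  mem_center_iff.mp (genComm_mem_center q') _

instance : (genCommSubgroup p r).Normal :=
  normal_of_le_center <| (closure_le _).mpr <| Set.range_subset_iff.mpr genComm_mem_center

lemma mk_itoGen_mul_comm (i j : Fin (r + 1)) :
    (itoGen p r i : ItoGroup p r ⧸ genCommSubgroup p r) * itoGen p r j =
      itoGen p r j * itoGen p r i := by
  wlog hij : i < j generalizing i j
  · rcases (not_lt.mp hij).eq_or_lt with rfl | hji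
    · rfl
    · exact (this j i hji).symm
  have hmk := map_comm (QuotientGroup.mk' (genCommSubgroup p r)) (itoGen p r i) (itoGen p r j)
  rw [QuotientGroup.mk'_apply, QuotientGroup.mk'_apply, QuotientGroup.mk'_apply] at hmk
  rw [← comm_eq_one_iff, ← hmk, QuotientGroup.eq_one_iff]
  exact subset_closure ⟨⟨(i, j), hij⟩, rfl⟩

lemma mk_itoGen_pow (i : Fin (r + 1)) :
    (itoGen p r i : ItoGroup p r ⧸ genCommSubgroup p r) ^ p = 1 := by
  rw [← QuotientGroup.mk_pow, itoGen_pow, QuotientGroup.mk_one]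

lemma closure_range_mk_itoGen :
    closure (Set.range fun i => (itoGen p r i : ItoGroup p r ⧸ genCommSubgroup p r)) = ⊤ := by
  rw [show (Set.range fun i => (itoGen p r i : ItoGroup p r ⧸ genCommSubgroup p r)) =
      QuotientGroup.mk' _ '' Set.range PresentedGroup.of from Set.range_comp _ _,
    ← MonoidHom.map_closure, PresentedGroup.closure_range_of,
    map_top_of_surjective _ (QuotientGroup.mk'_surjective _)]

variable [NeZero p]

instance : Finite (ItoGroup p r) := by
  have : Finite (ItoGroup p r ⧸ genCommSubgroup p r) := by
    have := finite_closure_range (n := p) (mk_itoGen_mul_comm (r := r)) mk_itoGen_pow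
    rw [closure_range_mk_itoGen] at this
    exact .of_equiv _ topEquiv.toEquiv
  have : Finite (genCommSubgroup p r) := finite_closure_range (n := p) genComm_mul_comm genComm_pow
  exact .of_equiv _ (groupEquivQuotientProdSubgroup (s := genCommSubgroup p r)).symm

theorem card_le : Nat.card (ItoGroup p r) ≤ p ^ (r + 1) * p ^ (r + 1).choose 2 := by
  rw [card_eq_card_quotient_mul_card_subgroup (genCommSubgroup p r)]
  refine Nat.mul_le_mul ?_ ?_
  · rw [← card_top, ← closure_range_mk_itoGen]
    simpa using card_closure_range_le mk_itoGen_mul_comm mk_itoGen_pow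
  · simpa [card_pairs] using card_closure_range_le (n := p) genComm_mul_comm genComm_pow

end ItoGroup

/-- `⟨a, c⟩` stands for `∏ᵢ aᵢ ^ a i * ∏_{i<j} [aᵢ, aⱼ] ^ c (i, j)`; moving `aᵢ` to the left
past `aⱼ` (`i < j`) costs the central factor `[aⱼ, aᵢ]`, whence the term `- x.a j * y.a i` in
the product. -/
@[ext] structure ItoModel (p r : ℕ) where
  a : Fin (r + 1) → ZMod p
  c : Pairs (Fin (r + 1)) → ZMod p

namespace ItoModel

variable {p r : ℕ}

instance : One (ItoModel p r) := ⟨⟨0, 0⟩⟩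

instance : Mul (ItoModel p r) :=
  ⟨fun x y => ⟨x.a + y.a, x.c + y.c - fun q => x.a q.1.2 * y.a q.1.1⟩⟩

instance : Inv (ItoModel p r) :=
  ⟨fun x => ⟨-x.a, -x.c - fun q => x.a q.1.2 * x.a q.1.1⟩⟩

lemma one_def : (1 : ItoModel p r) = ⟨0, 0⟩ := rfl

@[simp] lemma one_a : (1 : ItoModel p r).a = 0 := rfl
@[simp] lemma one_c : (1 : ItoModel p r).c = 0 := rfl
@[simp] lemma mul_a (x y : ItoModel p r) : (x * y).a = x.a + y.a := rfl
@[simp] lemma mul_c (x y : ItoModel p r) :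
    (x * y).c = x.c + y.c - fun q => x.a q.1.2 * y.a q.1.1 := rfl
@[simp] lemma inv_a (x : ItoModel p r) : x⁻¹.a = -x.a := rfl
@[simp] lemma inv_c (x : ItoModel p r) : x⁻¹.c = -x.c - fun q => x.a q.1.2 * x.a q.1.1 := rfl

instance : Group (ItoModel p r) :=
  Group.ofLeftAxioms
    (fun x y z => by ext <;> simp <;> ring)
    (fun x => by ext <;> simp)
    (fun x => by ext <;> simp; ring)

lemma comm_eq (x y : ItoModel p r) : comm x y = ⟨0, wedge x.a y.a⟩ := by
  ext q
  · simp [comm]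
  · simp [comm, wedge]; ring

lemma mk_zero_mul_mk_zero (c c' : Pairs (Fin (r + 1)) → ZMod p) :
    (⟨0, c⟩ : ItoModel p r) * ⟨0, c'⟩ = ⟨0, c + c'⟩ := by
  ext <;> simp

lemma pow_eq_of_mul_eq_zero {x : ItoModel p r} (hx : ∀ q : Pairs _, x.a q.1.2 * x.a q.1.1 = 0)
    (n : ℕ) : x ^ n = ⟨n • x.a, n • x.c⟩ := by
  induction n with
  | zero => ext <;> simp
  | succ n ih => ext <;> simp [pow_succ, ih, add_smul, mul_assoc, hx]

theorem card_eq [NeZero p] : Nat.card (ItoModel p r) = p ^ (r + 1) * p ^ (r + 1).choose 2 := by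
  let e : ItoModel p r ≃ (Fin (r + 1) → ZMod p) × (Pairs (Fin (r + 1)) → ZMod p) :=
    { toFun x := (x.a, x.c), invFun y := ⟨y.1, y.2⟩, left_inv _ := rfl, right_inv _ := rfl }
  simp [Nat.card_congr e, Nat.card_eq_fintype_card, card_pairs]

def gen (p r : ℕ) (i : Fin (r + 1)) : ItoModel p r := ⟨Pi.single i 1, 0⟩


lemma gen_pow (i : Fin (r + 1)) (n : ℕ) : gen p r i ^ n = ⟨Pi.single i n, 0⟩ := by
  rw [pow_eq_of_mul_eq_zero]
  · ext <;> simp [gen, Pi.single_apply]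
  · intro q
    simp only [gen, Pi.single_apply]
    split_ifs <;> grind

lemma comm_gen_gen (q : Pairs (Fin (r + 1))) :
    comm (gen p r q.1.1) (gen p r q.1.2) = ⟨0, Pi.single q 1⟩ := by
  rw [comm_eq]
  congr 1
  ext q'
  obtain ⟨⟨i, j⟩, hij⟩ := q
  obtain ⟨⟨i', j'⟩, hij'⟩ := q'
  simp only [gen, wedge, Pi.single_apply, Subtype.mk.injEq, Prod.mk.injEq]
  split_ifs <;> grind

lemma lift_gen_eq_one_of_mem_itoRels : ∀ w ∈ itoRels p r, FreeGroup.lift (gen p r) w = 1 := by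
  rintro w (⟨i, j, k, -, rfl⟩ | ⟨i, rfl⟩ | ⟨i, j, -, rfl⟩) <;>
    simp only [map_comm, map_pow, FreeGroup.lift_apply_of]
  · ext <;> simp [comm_eq]
  · ext <;> simp [gen_pow]
  · rw [comm_eq, pow_eq_of_mul_eq_zero (by simp)]
    ext <;> simp

noncomputable def ofItoGroup : ItoGroup p r →* ItoModel p r :=
  PresentedGroup.toGroup lift_gen_eq_one_of_mem_itoRels

lemma ofItoGroup_itoGen (i : Fin (r + 1)) : ofItoGroup (itoGen p r i) = gen p r i :=
  PresentedGroup.toGroup.of lift_gen_eq_one_of_mem_itoRels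

lemma gen_mem_range_ofItoGroup (i : Fin (r + 1)) : gen p r i ∈ (ofItoGroup (p := p)).range :=
  ⟨_, ofItoGroup_itoGen i⟩

lemma mk_zero_mem_range_ofItoGroup [NeZero p] (c : Pairs (Fin (r + 1)) → ZMod p) :
    (⟨0, c⟩ : ItoModel p r) ∈ ofItoGroup.range := by
  induction c using Pi.single_induction with
  | zero => exact one_mem _
  | add c c' hc hc' => simpa [mk_zero_mul_mk_zero] using mul_mem hc hc'
  | single q t =>
    have hcomm : comm (gen p r q.1.1) (gen p r q.1.2) ∈ ofItoGroup.range :=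
      ⟨comm (itoGen p r q.1.1) (itoGen p r q.1.2), by simp [ofItoGroup_itoGen]⟩
    have : (⟨0, Pi.single q t⟩ : ItoModel p r) =
        comm (gen p r q.1.1) (gen p r q.1.2) ^ t.val := by
      rw [comm_gen_gen, pow_eq_of_mul_eq_zero (by simp)]
      ext <;> simp [Pi.single_apply]
    exact this ▸ pow_mem hcomm _

theorem ofItoGroup_surjective [NeZero p] :
    Function.Surjective (ofItoGroup : ItoGroup p r → ItoModel p r) := by
  rw [← MonoidHom.range_eq_top, eq_top_iff]
  have key (a : Fin (r + 1) → ZMod p) : ∀ c, (⟨a, c⟩ : ItoModel p r) ∈ ofItoGroup.range := by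
    induction a using Pi.single_induction with
    | zero => exact mk_zero_mem_range_ofItoGroup
    | add a a' ha ha' =>
      intro c
      have : (⟨a + a', c⟩ : ItoModel p r) =
          ⟨a, c + fun q => a q.1.2 * a' q.1.1⟩ * ⟨a', 0⟩ := by
        ext <;> simp
      exact this ▸ mul_mem (ha _) (ha' 0)
    | single i t =>
      intro c
      have : (⟨Pi.single i t, c⟩ : ItoModel p r) = gen p r i ^ t.val * ⟨0, c⟩ := by
        ext <;> simp [gen_pow, Pi.single_apply]
      exact this ▸ mul_mem (pow_mem (gen_mem_range_ofItoGroup i) _) (mk_zero_mem_range_ofItoGroup c)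
  exact fun x _ => key x.a x.c

theorem ofItoGroup_bijective [NeZero p] :
    Function.Bijective (ofItoGroup : ItoGroup p r → ItoModel p r) :=
  ofItoGroup_surjective.bijective_of_nat_card_le <| card_eq (p := p) (r := r) ▸ ItoGroup.card_le

noncomputable def mulEquivItoGroup [NeZero p] : ItoGroup p r ≃* ItoModel p r :=
  .ofBijective _ ofItoGroup_bijective

def fiberEquiv (A : Pairs (Fin (r + 1)) → ZMod p) :
    fiber (⟨0, A⟩ : ItoModel p r) ≃
      {vw : (Fin (r + 1) → ZMod p) × (Fin (r + 1) → ZMod p) // wedge vw.1 vw.2 = A} ×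
        ((Pairs (Fin (r + 1)) → ZMod p) × (Pairs (Fin (r + 1)) → ZMod p)) where
  toFun xy := ⟨⟨(xy.1.1.a, xy.1.2.a), congrArg c ((comm_eq _ _).symm.trans xy.2)⟩,
    (xy.1.1.c, xy.1.2.c)⟩
  invFun t := ⟨(⟨t.1.1.1, t.2.1⟩, ⟨t.1.1.2, t.2.2⟩), (comm_eq _ _).trans (congrArg _ t.1.2)⟩
  left_inv _ := rfl
  right_inv _ := rfl

theorem card_fiber_mk_zero [NeZero p] (A : Pairs (Fin (r + 1)) → ZMod p) :
    Nat.card (fiber (⟨0, A⟩ : ItoModel p r)) =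
      Nat.card {vw : (Fin (r + 1) → ZMod p) × (Fin (r + 1) → ZMod p) // wedge vw.1 vw.2 = A} *
        p ^ (r ^ 2 + r) := by
  have hexp : (r + 1).choose 2 + (r + 1).choose 2 = r ^ 2 + r := by
    have h2 : 2 ∣ (r + 1) * r := by rw [mul_comm]; exact (Nat.even_mul_succ_self r).two_dvd
    rw [Nat.choose_two_right, Nat.add_sub_cancel, ← two_mul, Nat.mul_div_cancel' h2]
    ring
  rw [Nat.card_congr (fiberEquiv A), Nat.card_prod, Nat.card_prod, Nat.card_fun, Nat.card_zmod,
    Nat.card_eq_fintype_card (α := Pairs _), card_pairs, Fintype.card_fin, ← pow_add, hexp]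

end ItoModel

theorem stmt8_general (p r : ℕ) (hp : p.Prime) :
    (∀ g : ItoGroup p r, g ∈ KG (ItoGroup p r) → g ≠ 1 →
      Nat.card (fiber g) = (p ^ 2 - 1) * p ^ (r ^ 2 + r + 1)) ∧
    Nat.card (fiber (1 : ItoGroup p r)) =
      (p ^ (r + 1) + p ^ r - 1) * p ^ (r ^ 2 + r + 1) := by
  have : Fact p.Prime := ⟨hp⟩
  let e : ItoGroup p r ≃* ItoModel p r := ItoModel.mulEquivItoGroup
  constructor
  · rintro g ⟨x, y, rfl⟩ hg
    have hne : wedge (e x).a (e y).a ≠ 0 := fun h =>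
      hg <| e.injective <| by rw [map_comm, ItoModel.comm_eq, h, map_one, ItoModel.one_def]
    rw [← card_fiber_mulEquiv e, map_comm, ItoModel.comm_eq, ItoModel.card_fiber_mk_zero,
      card_wedge_fiber_of_ne_zero hne, ZMod.card]
    ring
  · rw [← card_fiber_mulEquiv e, map_one, ItoModel.one_def, ItoModel.card_fiber_mk_zero,
      card_wedge_fiber_zero, ZMod.card, Fintype.card_fin]
    have : p ^ (r + 1 + 1) + p ^ (r + 1) - p = (p ^ (r + 1) + p ^ r - 1) * p := by
      rw [Nat.sub_mul, one_mul, Nat.add_mul, ← pow_succ, ← pow_succ]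
    rw [this, mul_assoc, ← pow_succ']

/-- the sizes of the fibers of the commutator word map on Ito's
group `G_r`. -/
theorem stmt8 (p r : ℕ) (hp : p.Prime) (hp2 : 2 < p) (hr : 1 ≤ r) :
    (∀ g : ItoGroup p r, g ∈ KG (ItoGroup p r) → g ≠ 1 →
      Nat.card (fiber g) = (p ^ 2 - 1) * p ^ (r ^ 2 + r + 1)) ∧
    Nat.card (fiber (1 : ItoGroup p r)) =
      (p ^ (r + 1) + p ^ r - 1) * p ^ (r ^ 2 + r + 1) :=
  stmt8_general p r hp

end Paper
end

section
/- Let G be a finite group and H a subgroup of the center Z(G) (hence normal in G), and let π : G → G/H be the quotient map. Then for every g ∈ G: (a) the fiber of π(g) in G/H equals the union, over all y ∈ K(G) ∩ gH, of the images under π×π of the fibers of y in G; and (b) |fiber_{G/H}(π(g))| · |H|² = Σ_{y ∈ gH} |fiber_G(y)| = |{(x,y) ∈ G×G : [x,y] ∈ gH}|. -/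
open scoped Classical

namespace Paper

/-! Since `π × π` commutes with the commutator map, the preimage of `fiber_{G/H}(π g)` under
`π × π` is the set of pairs whose commutator lies in `gH`. Part (a) is the image of this
preimage; part (b) counts it twice, once along the fibers of `π × π` (each a coset of `H × H`)
and once along the fibers of the commutator map. -/

lemma map_comm_s17 {G Q : Type*} [Group G] [Group Q] (f : G →* Q) (x y : G) :
    f (comm x y) = comm (f x) (f y) := by
  simp only [comm, map_mul, map_inv]

lemma mk_eq_mk_iff_exists_mul {G : Type*} [Group G] (H : Subgroup G) [H.Normal] (g c : G) :
    (c : G ⧸ H) = g ↔ ∃ h ∈ H, c = g * h := by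
  rw [eq_comm, QuotientGroup.eq]
  exact ⟨fun hc => ⟨g⁻¹ * c, hc, by group⟩, by rintro ⟨h, hh, rfl⟩; simpa using hh⟩

lemma preimage_prodMap_fiber {G Q : Type*} [Group G] [Group Q] (f : G →* Q) (q : Q) :
    Prod.map f f ⁻¹' fiber q = ⋃ y ∈ KG G ∩ f ⁻¹' {q}, fiber y := by
  ext ⟨x, y⟩
  simp [fiber, KG, map_comm_s17]

lemma fiber_eq_iUnion_image_fiber {G Q : Type*} [Group G] [Group Q] {f : G →* Q}
    (hf : Function.Surjective f) (q : Q) :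
    fiber q = ⋃ y ∈ KG G ∩ f ⁻¹' {q}, Prod.map f f '' fiber y := by
  rw [← Set.image_iUnion₂, ← preimage_prodMap_fiber, Set.image_preimage_eq _ (hf.prodMap hf)]

lemma card_preimage_prodMap_mk {G : Type*} [Group G] (H : Subgroup G)
    (S : Set ((G ⧸ H) × (G ⧸ H))) :
    Nat.card (Prod.map (QuotientGroup.mk : G → G ⧸ H) QuotientGroup.mk ⁻¹' S) =
      Nat.card S * Nat.card H ^ 2 := by
  have hS : Prod.map (QuotientGroup.mk : G → G ⧸ H) QuotientGroup.mk ⁻¹' S =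
      (QuotientGroup.mk : G × G → (G × G) ⧸ H.prod H) ⁻¹' (QuotientGroup.prodEquiv H H ⁻¹' S) :=
    rfl
  rw [hS, QuotientGroup.card_preimage_mk, Nat.card_congr (Subgroup.prodEquiv H H).toEquiv,
    Nat.card_prod, Nat.card_preimage_of_injective (QuotientGroup.prodEquiv H H).injective
      fun p _ => (QuotientGroup.prodEquiv H H).surjective p, mul_comm, sq]

theorem stmt17_general (G : Type*) [Group G] [Fintype G]
    (H : Subgroup G) [H.Normal] (g : G) :
    -- (a)
    fiber (QuotientGroup.mk g : G ⧸ H) =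
      (⋃ y ∈ KG G ∩ {x : G | ∃ h ∈ H, x = g * h},
        (fun q : G × G =>
          ((QuotientGroup.mk q.1 : G ⧸ H), (QuotientGroup.mk q.2 : G ⧸ H))) '' fiber y) ∧
    -- (b)
    Nat.card (fiber (QuotientGroup.mk g : G ⧸ H)) * (Nat.card H) ^ 2 =
      ∑ y ∈ Finset.univ.filter (fun y : G => ∃ h ∈ H, y = g * h), Nat.card (fiber y) ∧
    Nat.card (fiber (QuotientGroup.mk g : G ⧸ H)) * (Nat.card H) ^ 2 =
      Nat.card {q : G × G | ∃ h ∈ H, comm q.1 q.2 = g * h} := by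
  have hcoset : {x : G | ∃ h ∈ H, x = g * h} = QuotientGroup.mk' H ⁻¹' {(g : G ⧸ H)} := by
    ext x
    exact (mk_eq_mk_iff_exists_mul H g x).symm
  have hpullback : {q : G × G | ∃ h ∈ H, comm q.1 q.2 = g * h} =
      Prod.map QuotientGroup.mk QuotientGroup.mk ⁻¹' fiber (g : G ⧸ H) := by
    ext q
    exact (mk_eq_mk_iff_exists_mul H g _).symm
  have hcount := card_preimage_prodMap_mk H (fiber (g : G ⧸ H))
  rw [← hpullback] at hcount
  refine ⟨?_, ?_, hcount.symm⟩
  · rw [hcoset]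
    exact fiber_eq_iUnion_image_fiber (QuotientGroup.mk'_surjective H) _
  · have hsplit : {q : G × G | ∃ h ∈ H, comm q.1 q.2 = g * h} = (fun q => comm q.1 q.2) ⁻¹'
        ↑(Finset.univ.filter (fun y : G => ∃ h ∈ H, y = g * h)) := by
      ext q
      simp
    rw [← hcount, hsplit]
    exact Finset.card_preimage_eq_sum_card_image_eq fun _ _ => Set.toFinite _

/-- fibers in a central quotient `G/H`: (a) the fiber of `π(g)`
is the union over `y ∈ K(G) ∩ gH` of the images of the fibers of `y`; and
(b) the corresponding counting identities. -/
theorem stmt17 (G : Type*) [Group G] [Fintype G]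
    (H : Subgroup G) (hH : H ≤ Subgroup.center G) [H.Normal] (g : G) :
    -- (a)
    fiber (QuotientGroup.mk g : G ⧸ H) =
      (⋃ y ∈ KG G ∩ {x : G | ∃ h ∈ H, x = g * h},
        (fun q : G × G =>
          ((QuotientGroup.mk q.1 : G ⧸ H), (QuotientGroup.mk q.2 : G ⧸ H))) '' fiber y) ∧
    -- (b)
    Nat.card (fiber (QuotientGroup.mk g : G ⧸ H)) * (Nat.card H) ^ 2 =
      ∑ y ∈ Finset.univ.filter (fun y : G => ∃ h ∈ H, y = g * h), Nat.card (fiber y) ∧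
    Nat.card (fiber (QuotientGroup.mk g : G ⧸ H)) * (Nat.card H) ^ 2 =
      Nat.card {q : G × G | ∃ h ∈ H, comm q.1 q.2 = g * h} :=
  stmt17_general G H g

end Paper
end
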